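/- arXiv:1903.00029 — 9 statements merged into one kernel-verified Lean document; each statement's English description precedes it below -/
import Mathlib

section
/- Removing the single highest-value item from the item set decreases no agent's maximin share when the number of agents also decreases by one: for any agent i and any item j ∈ M, μ_i^{n-1}(M \ {j}) ≥ μ_i^n(M). -/
open Finset

/-- `P` is a partition of the finite set `M` of items into `n` (possibly empty) bundles. -/
def IsPartition {ι : Type*} [DecidableEq ι] (n : ℕ) (M : Finset ι) (P : Fin n → Finset ι) : Prop :=
  (∀ k l, k ≠ l → Disjoint (P k) (P l)) ∧ Finset.univ.biUnion P = M

/-- The maximin share of an agent with additive valuation `v` when `M` is split into `n`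
bundles: the supremum over partitions of `M` into `n` bundles of the minimum bundle value. -/
noncomputable def mms {ι : Type*} [DecidableEq ι] (v : ι → ℝ) (n : ℕ) (M : Finset ι) : ℝ :=
  sSup {x | ∃ P : Fin n → Finset ι, IsPartition n M P ∧ x = ⨅ k : Fin n, ∑ j ∈ P k, v j}

lemma part_subset {ι : Type*} [DecidableEq ι] {n : ℕ} {M : Finset ι} {P : Fin n → Finset ι}
    (hP : IsPartition n M P) (k : Fin n) : P k ⊆ M := by
  intro x hx
  rw [← hP.2]
  exact mem_biUnion.2 ⟨k, mem_univ _, hx⟩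

lemma mms_bddAbove {ι : Type*} [DecidableEq ι] (v : ι → ℝ) (n : ℕ) (hn : 0 < n) (M : Finset ι)
    (hv : ∀ k ∈ M, 0 ≤ v k) :
    BddAbove {x | ∃ P : Fin n → Finset ι, IsPartition n M P ∧ x = ⨅ k : Fin n, ∑ j ∈ P k, v j} := by
  refine ⟨∑ j ∈ M, v j, ?_⟩
  rintro x ⟨P, hP, rfl⟩
  have : Nonempty (Fin n) := ⟨⟨0, hn⟩⟩
  calc ⨅ k : Fin n, ∑ j ∈ P k, v j ≤ ∑ j ∈ P ⟨0, hn⟩, v j :=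
        ciInf_le (Set.finite_range _).bddBelow _
    _ ≤ ∑ j ∈ M, v j :=
        Finset.sum_le_sum_of_subset_of_nonneg (part_subset hP _) (fun i hi _ => hv i hi)

/-- Removing one item (in particular the highest-value item) while reducing
the number of agents by one does not decrease the maximin share:
μ_i^{n-1}(M \ {j}) ≥ μ_i^n(M). -/
theorem mms_remove_one_item {ι : Type*} [DecidableEq ι] (M : Finset ι) (v : ι → ℝ)
    (hv : ∀ k ∈ M, 0 ≤ v k) (n : ℕ) (hn : 2 ≤ n) (j : ι) (hj : j ∈ M)
    (hmax : ∀ k ∈ M, v k ≤ v j) :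
    mms v n M ≤ mms v (n - 1) (M.erase j) := by
  obtain ⟨m, rfl⟩ : ∃ m, n = m + 2 := ⟨n - 2, by omega⟩
  have hred : m + 2 - 1 = m + 1 := rfl
  rw [hred]
  have hv' : ∀ k ∈ M.erase j, 0 ≤ v k := fun k hk => hv k (mem_of_mem_erase hk)
  have hbdd := mms_bddAbove v (m + 1) (Nat.succ_pos m) (M.erase j) hv'
  -- any partition of M.erase j into m+1 bundles gives a lower bound on the RHS
  have key : ∀ Q : Fin (m + 1) → Finset ι, IsPartition (m + 1) (M.erase j) Q →
      (⨅ k : Fin (m + 1), ∑ i ∈ Q k, v i) ≤ mms v (m + 1) (M.erase j) := by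
    intro Q hQ
    exact le_csSup hbdd ⟨Q, hQ, rfl⟩
  -- RHS is nonnegative, witness: put everything in bundle 0
  have h0 : (0 : ℝ) ≤ mms v (m + 1) (M.erase j) := by
    set Q0 : Fin (m + 1) → Finset ι := fun k => if k = 0 then M.erase j else ∅ with hQ0
    have hpart : IsPartition (m + 1) (M.erase j) Q0 := by
      constructor
      · intro k l hkl
        rcases eq_or_ne k 0 with rfl | hk <;> rcases eq_or_ne l 0 with rfl | hl
        · exact absurd rfl hkl
        · simp only [hQ0, if_pos rfl, if_neg hl]
          exact disjoint_empty_right _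
        · simp only [hQ0, if_pos rfl, if_neg hk]
          exact disjoint_empty_left _
        · simp only [hQ0, if_neg hk, if_neg hl]
          exact disjoint_empty_left _
      · ext x
        simp only [mem_biUnion, mem_univ, true_and, hQ0]
        constructor
        · rintro ⟨k, hk⟩
          split at hk <;> simp_all
        · intro hx
          exact ⟨0, by simp [hx]⟩
    refine le_trans ?_ (key Q0 hpart)
    refine le_ciInf fun k => Finset.sum_nonneg fun i hi => ?_
    apply hv
    simp only [hQ0] at hi
    split at hi
    · exact mem_of_mem_erase hi
    · simp at hi
  apply Real.sSup_le _ h0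
  rintro x ⟨P, hP, rfl⟩
  -- find the bundle containing j
  obtain ⟨k₀, -, hk₀⟩ : ∃ k, k ∈ univ ∧ j ∈ P k := mem_biUnion.1 (by rw [hP.2]; exact hj)
  set e : Fin (m + 1) → Fin (m + 2) := Fin.succAbove k₀ with he
  have hene : ∀ k, e k ≠ k₀ := fun k => Fin.succAbove_ne k₀ k
  have heinj : Function.Injective e := Fin.succAbove_right_injective
  set Q : Fin (m + 1) → Finset ι :=
    fun k => if k = 0 then P (e 0) ∪ (P k₀).erase j else P (e k) with hQdef
  have hQsub : ∀ k, Q k ⊆ M := by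
    intro k
    simp only [hQdef]
    split
    · exact union_subset (part_subset hP _) ((erase_subset _ _).trans (part_subset hP _))
    · exact part_subset hP _
  have hQpart : IsPartition (m + 1) (M.erase j) Q := by
    constructor
    · intro k l hkl
      have hd : ∀ a b : Fin (m + 2), a ≠ b → Disjoint (P a) (P b) := hP.1
      have derase : ∀ l : Fin (m + 1), Disjoint ((P k₀).erase j) (P (e l)) :=
        fun l => disjoint_of_subset_left (erase_subset _ _) (hd _ _ (fun h => hene l h.symm))
      simp only [hQdef]
      rcases eq_or_ne k 0 with hk | hk <;> rcases eq_or_ne l 0 with hl | hl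
      · exact absurd (hk.trans hl.symm) hkl
      · simp only [hk, if_pos rfl, if_neg hl]
        exact disjoint_union_left.2 ⟨hd _ _ fun h => hkl (heinj (hk ▸ h)), derase l⟩
      · simp only [hl, if_pos rfl, if_neg hk]
        exact (disjoint_union_left.2 ⟨hd _ _ fun h => hkl.symm (heinj (hl ▸ h)), derase k⟩).symm
      · simp only [if_neg hk, if_neg hl]
        exact hd _ _ fun h => hkl (heinj h)
    · ext x
      simp only [mem_biUnion, mem_univ, true_and, mem_erase]
      constructor
      · rintro ⟨k, hk⟩
        have hxM : x ∈ M := hQsub k hk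
        refine ⟨?_, hxM⟩
        simp only [hQdef] at hk
        have hxne : ∀ l : Fin (m + 1), x ∈ P (e l) → x ≠ j :=
          fun l hx => (hP.1 _ _ (hene l)).forall_ne_finset hx hk₀
        split at hk
        · rcases mem_union.1 hk with h | h
          · exact hxne 0 h
          · exact (mem_erase.1 h).1
        · exact hxne _ hk
      · rintro ⟨hxj, hxM⟩
        obtain ⟨l, -, hl⟩ : ∃ l, l ∈ univ ∧ x ∈ P l := mem_biUnion.1 (by rw [hP.2]; exact hxM)
        rcases eq_or_ne l k₀ with rfl | hlk
        · exact ⟨0, by simp [hQdef, mem_erase, hxj, hl]⟩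
        · obtain ⟨k, rfl⟩ := Fin.exists_succAbove_eq hlk
          rcases eq_or_ne k 0 with rfl | hk
          · exact ⟨0, by simp [hQdef, hl, he]⟩
          · exact ⟨k, by simp [hQdef, if_neg hk, hl, he]⟩
  refine le_trans ?_ (key Q hQpart)
  refine le_ciInf fun k => ?_
  refine (ciInf_le (Set.finite_range _).bddBelow (e k)).trans ?_
  rcases eq_or_ne k 0 with rfl | hk
  · simp only [hQdef, if_pos rfl]
    refine Finset.sum_le_sum_of_subset_of_nonneg subset_union_left (fun i hi _ => hv i ?_)
    rcases mem_union.1 hi with h | h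
    · exact part_subset hP _ h
    · exact part_subset hP _ (mem_of_mem_erase h)
  · simp only [hQdef, if_neg hk]
    exact le_refl _
end

section
/- Let items of M be sorted so that v_i(1) ≥ v_i(2) ≥ … ≥ v_i(m) for agent i, and let n ≥ 2 with m ≥ n+1. Then removing the two items ranked n and n+1 satisfies μ_i^{n-1}(M \ {n, n+1}) ≥ μ_i^n(M). -/
open Finset

lemma mms_set_bddAbove (v : ℕ → ℝ) (n : ℕ) (M : Finset ℕ)
    (hnn : ∀ j ∈ M, 0 ≤ v j) :
    BddAbove {x | ∃ P : Fin (n+1) → Finset ℕ,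
      IsPartition (n+1) M P ∧ x = ⨅ k, ∑ j ∈ P k, v j} := by
  refine ⟨∑ j ∈ M, v j, ?_⟩
  rintro x ⟨P, hP, rfl⟩
  have hsub : P 0 ⊆ M := by
    intro j hj
    rw [← hP.2]; exact mem_biUnion.2 ⟨0, mem_univ _, hj⟩
  calc (⨅ k, ∑ j ∈ P k, v j) ≤ ∑ j ∈ P 0, v j := ciInf_le (Finite.bddBelow_range _) 0
    _ ≤ ∑ j ∈ M, v j :=
        Finset.sum_le_sum_of_subset_of_nonneg hsub (fun j hj _ => hnn j hj)

lemma key (N m : ℕ) (hm : N + 3 ≤ m) (v : ℕ → ℝ)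
    (hnn : ∀ j ∈ Finset.Icc 1 m, 0 ≤ v j)
    (hsorted : ∀ j k, 1 ≤ j → j ≤ k → k ≤ m → v k ≤ v j)
    (P : Fin (N+2) → Finset ℕ) (hP : IsPartition (N+2) (Finset.Icc 1 m) P) :
    (⨅ k, ∑ j ∈ P k, v j) ≤ mms v (N+1) (Finset.Icc 1 m \ {N+2, N+3}) := by
  -- pigeonhole: two items among 1..N+3 are in the same bundle
  have hmem : ∀ j ∈ Finset.Icc 1 (N+3), ∃ k, j ∈ P k := by
    intro j hj
    have hj' : j ∈ Finset.Icc 1 m := by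
      rw [mem_Icc] at *; omega
    rw [← hP.2] at hj'
    obtain ⟨k, _, hk⟩ := mem_biUnion.1 hj'
    exact ⟨k, hk⟩
  choose f hf using hmem
  set g : ℕ → Fin (N+2) := fun j => if h : j ∈ Finset.Icc 1 (N+3) then f j h else 0 with hg
  obtain ⟨a', ha', b', hb', hne, heq⟩ :=
    Finset.exists_ne_map_eq_of_card_lt_of_maps_to
      (s := Finset.Icc 1 (N+3)) (t := (Finset.univ : Finset (Fin (N+2))))
      (by simp [Nat.card_Icc]) (fun x _ => mem_univ (g x))
  have ha'P : a' ∈ P (g a') := by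
    simp only [hg]; rw [dif_pos ha']; exact hf a' ha'
  have hb'P : b' ∈ P (g a') := by
    rw [heq]; simp only [hg]; rw [dif_pos hb']; exact hf b' hb'
  set k₀ : Fin (N+2) := g a' with hk₀
  -- WLOG a < b
  set a := min a' b' with hadef
  set b := max a' b' with hbdef
  have hab : a < b := by
    rcases lt_or_gt_of_ne hne with h | h
    · simp [hadef, hbdef, min_eq_left h.le, max_eq_right h.le, h]
    · simp [hadef, hbdef, min_eq_right h.le, max_eq_left h.le, h]
  have haI : a ∈ Finset.Icc 1 (N+3) := by
    rcases min_choice a' b' with h | h <;> rw [hadef, h] <;> assumption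
  have hbI : b ∈ Finset.Icc 1 (N+3) := by
    rcases max_choice a' b' with h | h <;> rw [hbdef, h] <;> assumption
  have haP : a ∈ P k₀ := by
    rcases min_choice a' b' with h | h <;> rw [hadef, h] <;> assumption
  have hbP : b ∈ P k₀ := by
    rcases max_choice a' b' with h | h <;> rw [hbdef, h] <;> assumption
  have ha1 : 1 ≤ a := (mem_Icc.1 haI).1
  have hb3 : b ≤ N + 3 := (mem_Icc.1 hbI).2
  have ha2 : a ≤ N + 2 := by omega
  clear_value a b k₀
  -- the swap permutation
  set e : Equiv.Perm ℕ := (Equiv.swap b (N+3)).trans (Equiv.swap a (N+2)) with he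
  have hea : e a = N + 2 := by
    simp only [he, Equiv.trans_apply]
    rw [Equiv.swap_apply_of_ne_of_ne (a := b) (b := N+3) (x := a) (by omega) (by omega),
      Equiv.swap_apply_left]
  have heb : e b = N + 3 := by
    simp only [he, Equiv.trans_apply]
    rw [Equiv.swap_apply_left b (N+3),
      Equiv.swap_apply_of_ne_of_ne (a := a) (b := N+2) (x := N+3) (by omega) (by omega)]
  have hrange : ∀ x, e x = x ∨ e x = a ∨ e x = b ∨ e x = N + 2 ∨ e x = N + 3 := by
    intro x
    simp only [he, Equiv.trans_apply, Equiv.swap_apply_def]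
    split_ifs <;> tauto
  have hmaps : ∀ x ∈ Finset.Icc 1 m, e x ∈ Finset.Icc 1 m := by
    intro x hx
    rw [mem_Icc] at hx
    rcases hrange x with h | h | h | h | h <;> rw [h, mem_Icc] <;> omega
  have hinj : Function.Injective e := e.injective
  have hMimg : (Finset.Icc 1 m).image e = Finset.Icc 1 m := by
    apply Finset.eq_of_subset_of_card_le
    · exact Finset.image_subset_iff.2 hmaps
    · rw [Finset.card_image_of_injective _ hinj]
  have hsubM : ∀ k, P k ⊆ Finset.Icc 1 m := by
    intro k j hj
    rw [← hP.2]; exact mem_biUnion.2 ⟨k, mem_univ _, hj⟩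
  -- item-wise improvement
  have hitem : ∀ j ∈ Finset.Icc 1 m, j ≠ a → j ≠ b → v j ≤ v (e j) := by
    intro j hj hja hjb
    rw [mem_Icc] at hj
    by_cases h2 : j = N + 2
    · subst h2
      have h : e (N+2) = a := by
        simp only [he, Equiv.trans_apply]
        rw [Equiv.swap_apply_of_ne_of_ne (a := b) (b := N+3) (x := N+2) hjb (by omega),
          Equiv.swap_apply_right]
      rw [h]; exact hsorted a (N+2) ha1 ha2 (by omega)
    by_cases h3 : j = N + 3
    · subst h3
      have hswap1 : Equiv.swap b (N+3) (N+3) = b := Equiv.swap_apply_right _ _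
      by_cases hbb : b = N + 2
      · have h : e (N+3) = a := by
          simp only [he, Equiv.trans_apply]
          rw [hswap1, hbb, Equiv.swap_apply_right]
        rw [h]; exact hsorted a (N+3) ha1 (by omega) (by omega)
      · have h : e (N+3) = b := by
          simp only [he, Equiv.trans_apply]
          rw [hswap1, Equiv.swap_apply_of_ne_of_ne (a := a) (b := N+2) (x := b)
            (by omega) hbb]
        rw [h]; exact hsorted b (N+3) (by omega) hb3 (by omega)
    · have h : e j = j := by
        simp only [he, Equiv.trans_apply]
        rw [Equiv.swap_apply_of_ne_of_ne (a := b) (b := N+3) (x := j) hjb h3,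
          Equiv.swap_apply_of_ne_of_ne (a := a) (b := N+2) (x := j) hja h2]
      rw [h]
  -- the new partition
  set R : Finset ℕ := ((P k₀).image e) \ {N+2, N+3} with hR
  set Q : Fin (N+1) → Finset ℕ :=
    fun i => ((P (k₀.succAbove i)).image e) ∪ (if i = 0 then R else ∅) with hQ
  have hRsub : R ⊆ Finset.Icc 1 m := by
    intro x hx
    rw [hR, mem_sdiff] at hx
    obtain ⟨y, hy, rfl⟩ := Finset.mem_image.1 hx.1
    exact hmaps y (hsubM _ hy)
  have hdisjR : ∀ i : Fin (N+1), Disjoint ((P (k₀.succAbove i)).image e) R := by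
    intro i
    refine Finset.disjoint_left.2 fun x hx hxR => ?_
    rw [hR, mem_sdiff] at hxR
    obtain ⟨y, hy, rfl⟩ := Finset.mem_image.1 hx
    obtain ⟨z, hz, hez⟩ := Finset.mem_image.1 hxR.1
    have hzy : z = y := hinj hez
    subst hzy
    exact Finset.disjoint_left.1 (hP.1 _ _ (Fin.succAbove_ne k₀ i)) hy hz
  have hQpart : IsPartition (N+1) (Finset.Icc 1 m \ {N+2, N+3}) Q := by
    constructor
    · intro i l hil
      simp only [hQ]
      have h1 : Disjoint ((P (k₀.succAbove i)).image e) ((P (k₀.succAbove l)).image e) := by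
        rw [Finset.disjoint_image hinj]
        exact hP.1 _ _ (fun h => hil (Fin.succAbove_right_injective h))
      rcases eq_or_ne i 0 with hi | hi <;> rcases eq_or_ne l 0 with hl | hl
      · exact absurd (hi.trans hl.symm) hil
      · simp only [if_pos hi, if_neg hl, Finset.union_empty]
        exact Finset.disjoint_union_left.2 ⟨h1, (hdisjR l).symm⟩
      · simp only [if_neg hi, if_pos hl, Finset.union_empty]
        exact Finset.disjoint_union_right.2 ⟨h1, hdisjR i⟩
      · simp only [if_neg hi, if_neg hl, Finset.union_empty]
        exact h1
    · ext x
      simp only [mem_biUnion, mem_univ, true_and]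
      constructor
      · rintro ⟨i, hx⟩
        simp only [hQ] at hx
        rcases Finset.mem_union.1 hx with hx | hx
        · obtain ⟨y, hy, rfl⟩ := Finset.mem_image.1 hx
          have hneq : k₀.succAbove i ≠ k₀ := Fin.succAbove_ne k₀ i
          have hya : y ≠ a := fun h =>
            Finset.disjoint_left.1 (hP.1 _ _ hneq) hy (h ▸ haP)
          have hyb : y ≠ b := fun h =>
            Finset.disjoint_left.1 (hP.1 _ _ hneq) hy (h ▸ hbP)
          rw [mem_sdiff]
          refine ⟨hmaps y (hsubM _ hy), ?_⟩
          simp only [mem_insert, mem_singleton]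
          push_neg
          exact ⟨fun h => hya (hinj (h.trans hea.symm)),
            fun h => hyb (hinj (h.trans heb.symm))⟩
        · split_ifs at hx with h0
          · rw [hR, mem_sdiff] at hx
            rw [mem_sdiff]
            obtain ⟨y, hy, rfl⟩ := Finset.mem_image.1 hx.1
            exact ⟨hmaps y (hsubM _ hy), hx.2⟩
          · simp at hx
      · intro hx
        rw [mem_sdiff] at hx
        obtain ⟨hxM, hxns⟩ := hx
        have hx' : x ∈ (Finset.Icc 1 m).image e := hMimg.symm ▸ hxM
        obtain ⟨y, hyM, rfl⟩ := Finset.mem_image.1 hx'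
        rw [← hP.2] at hyM
        obtain ⟨k, _, hyk⟩ := mem_biUnion.1 hyM
        by_cases hk : k = k₀
        · subst hk
          refine ⟨0, ?_⟩
          simp only [hQ]
          apply Finset.mem_union_right
          rw [if_pos trivial, hR, mem_sdiff]
          exact ⟨Finset.mem_image_of_mem e hyk, hxns⟩
        · obtain ⟨i, hi⟩ := Fin.exists_succAbove_eq hk
          refine ⟨i, ?_⟩
          simp only [hQ]
          exact Finset.mem_union_left _ (hi ▸ Finset.mem_image_of_mem e hyk)
  -- values only improve
  have hbase : ∀ i : Fin (N+1), (⨅ k, ∑ j ∈ P k, v j) ≤ ∑ j ∈ Q i, v j := by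
    intro i
    have h1 : (⨅ k, ∑ j ∈ P k, v j) ≤ ∑ j ∈ P (k₀.succAbove i), v j :=
      ciInf_le (Finite.bddBelow_range _) _
    refine h1.trans ?_
    have hsum1 : ∑ j ∈ P (k₀.succAbove i), v j ≤ ∑ x ∈ (P (k₀.succAbove i)).image e, v x := by
      rw [Finset.sum_image (fun x _ y _ h => hinj h)]
      apply Finset.sum_le_sum
      intro j hj
      have hneq : k₀.succAbove i ≠ k₀ := Fin.succAbove_ne k₀ i
      exact hitem j (hsubM _ hj)
        (fun h => Finset.disjoint_left.1 (hP.1 _ _ hneq) hj (h ▸ haP))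
        (fun h => Finset.disjoint_left.1 (hP.1 _ _ hneq) hj (h ▸ hbP))
    refine hsum1.trans ?_
    simp only [hQ]
    split_ifs with h0
    · rw [Finset.sum_union (hdisjR i)]
      have hnnR : 0 ≤ ∑ j ∈ R, v j := Finset.sum_nonneg fun j hj => hnn j (hRsub hj)
      linarith
    · rw [Finset.union_empty]
  -- conclude
  have hQmem : (⨅ i : Fin (N+1), ∑ j ∈ Q i, v j) ∈
      {x | ∃ P' : Fin (N+1) → Finset ℕ,
        IsPartition (N+1) (Finset.Icc 1 m \ {N+2, N+3}) P' ∧ x = ⨅ k, ∑ j ∈ P' k, v j} :=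
    ⟨Q, hQpart, rfl⟩
  calc (⨅ k, ∑ j ∈ P k, v j) ≤ ⨅ i : Fin (N+1), ∑ j ∈ Q i, v j := le_ciInf hbase
    _ ≤ mms v (N+1) (Finset.Icc 1 m \ {N+2, N+3}) :=
        le_csSup (mms_set_bddAbove v N _ (fun j hj => hnn j (mem_sdiff.1 hj).1)) hQmem

/-- For an ordered instance (items 1..m sorted nonincreasingly), removing the
items ranked n and n+1 satisfies μ_i^{n-1}(M \ {n, n+1}) ≥ μ_i^n(M). -/
theorem mms_remove_S2 (n m : ℕ) (hn : 2 ≤ n) (hm : n + 1 ≤ m) (v : ℕ → ℝ)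
    (hnn : ∀ j ∈ Finset.Icc 1 m, 0 ≤ v j)
    (hsorted : ∀ j k, 1 ≤ j → j ≤ k → k ≤ m → v k ≤ v j) :
    mms v n (Finset.Icc 1 m) ≤ mms v (n - 1) (Finset.Icc 1 m \ {n, n + 1}) := by
  obtain ⟨N, rfl⟩ : ∃ N, n = N + 2 := ⟨n - 2, by omega⟩
  have h1 : N + 2 - 1 = N + 1 := by omega
  have h2 : N + 2 + 1 = N + 3 := by omega
  rw [h1, h2]
  have hm' : N + 3 ≤ m := by omega
  have hne : Set.Nonempty {x | ∃ P : Fin (N+2) → Finset ℕ,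
      IsPartition (N+2) (Finset.Icc 1 m) P ∧ x = ⨅ k, ∑ j ∈ P k, v j} := by
    refine ⟨_, (fun k => if k = 0 then Finset.Icc 1 m else ∅), ?_, rfl⟩
    constructor
    · intro k l hkl
      rcases eq_or_ne k 0 with hk | hk <;> rcases eq_or_ne l 0 with hl | hl
      · exact absurd (hk.trans hl.symm) hkl
      all_goals simp [hk, hl]
    · ext x
      simp only [mem_biUnion, mem_univ, true_and]
      constructor
      · rintro ⟨k, hx⟩
        split_ifs at hx with h
        · exact hx
        · simp at hx
      · intro hx
        exact ⟨0, by simp [hx]⟩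
  conv_lhs => rw [mms]
  refine csSup_le hne ?_
  rintro x ⟨P, hP, rfl⟩
  exact key N m hm' v hnn hsorted P hP
end

section
/- Let items of M be sorted in nonincreasing order of value for agent i, and let n ≥ 2 with m ≥ 2n+1. Then removing the three items ranked 2n−1, 2n, and 2n+1 satisfies μ_i^{n-1}(M \ {2n−1, 2n, 2n+1}) ≥ μ_i^n(M). -/
/-!
Given an `n`-partition `P` of `M`, pigeonhole gives a bundle `P k` holding three of the items
`1, …, 2n+1`. Drop `P k`. The other bundles hold at most `3 - #(P k ∩ {2n-1, 2n, 2n+1})` of the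
three removed items, and `P k` holds at least that many items ranked `≤ 2n - 2`, so the removed
items can be swapped injectively for items of `P k` that are worth at least as much. Adding the
leftover items to one bundle yields an `(n-1)`-partition of `M \ {2n-1, 2n, 2n+1}` each of whose
bundles is worth at least as much as some bundle of `P`.
-/

open Finset

lemma exists_injOn_mapsTo_of_card_le {ι : Type*} {s t : Finset ι} (h : #s ≤ #t) :
    ∃ f : ι → ι, Set.InjOn f s ∧ Set.MapsTo f s t := by
  rcases isEmpty_or_nonempty ι with _ | _
  · exact ⟨id, Set.injOn_id _, fun x => isEmptyElim x⟩
  obtain ⟨f, hmaps, hinj⟩ :=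
    s.finite_toSet.exists_injOn_of_encard_le (t := (t : Set ι)) (by simpa using h)
  exact ⟨f, hinj, hmaps⟩

section Exchange

open Function

variable {ι κ : Type*} [DecidableEq ι]

lemma exists_pairwise_disjoint_exchange (v : ι → ℝ) {Q : κ → Finset ι}
    (hQ : Pairwise (Disjoint on Q)) {S A : Finset ι} (hSA : #S ≤ #A)
    (hAQ : ∀ j, Disjoint A (Q j)) (hv : ∀ s ∈ S, ∀ a ∈ A, v s ≤ v a) :
    ∃ B : κ → Finset ι, Pairwise (Disjoint on B) ∧ (∀ j, B j ⊆ Q j \ S ∪ A) ∧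
      ∀ j, ∑ i ∈ Q j, v i ≤ ∑ i ∈ B j, v i := by
  obtain ⟨f, hinj, hmaps⟩ := exists_injOn_mapsTo_of_card_le hSA
  have himage : ∀ j, (Q j ∩ S).image f ⊆ A :=
    fun j => image_subset_iff.2 fun s hs => hmaps (mem_inter.1 hs).2
  have hinj' : ∀ j, Set.InjOn f ↑(Q j ∩ S) :=
    fun j => hinj.mono (by simp only [coe_inter, Set.inter_subset_right])
  refine ⟨fun j => Q j \ S ∪ (Q j ∩ S).image f, fun j l hjl => ?_,
    fun j => union_subset_union_right (himage j), fun j => ?_⟩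
  · have hff : Disjoint ((Q j ∩ S).image f) ((Q l ∩ S).image f) := by
      simp only [disjoint_left, mem_image, mem_inter]
      rintro _ ⟨s, ⟨hsj, hsS⟩, rfl⟩ ⟨s', ⟨hs'l, hs'S⟩, hss'⟩
      exact disjoint_left.1 (hQ hjl) hsj (hinj hs'S hsS hss' ▸ hs'l)
    simp only [onFun, disjoint_union_left, disjoint_union_right]
    exact ⟨⟨(hQ hjl).mono sdiff_subset sdiff_subset, (hAQ l).mono (himage j) sdiff_subset⟩,
      (hAQ j).symm.mono sdiff_subset (himage l), hff⟩
  · rw [sum_union ((hAQ j).symm.mono sdiff_subset (himage j)), sum_image (hinj' j),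
      ← sum_inter_add_sum_sdiff (Q j) S, add_comm]
    gcongr with s hs
    exact hv s (mem_inter.1 hs).2 (f s) (hmaps (mem_inter.1 hs).2)

end Exchange

namespace IsPartition

open Function

variable {ι : Type*} [DecidableEq ι] {n : ℕ} {M : Finset ι} {P : Fin n → Finset ι}

lemma subset (hP : IsPartition n M P) (k : Fin n) : P k ⊆ M :=
  hP.2 ▸ subset_biUnion_of_mem P (mem_univ k)

lemma exists_lt_card_inter (hP : IsPartition n M P) {s : Finset ι} (hs : s ⊆ M) {d : ℕ}
    (h : n * d < #s) : ∃ k, d < #(P k ∩ s) := by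
  have hcover : #s ≤ ∑ k, #(P k ∩ s) := by
    calc #s = #(univ.biUnion fun k => P k ∩ s) := by
          rw [← biUnion_inter, hP.2, inter_eq_right.2 hs]
      _ ≤ ∑ k, #(P k ∩ s) := card_biUnion_le
  obtain ⟨k, -, hk⟩ := exists_lt_of_sum_lt (s := univ) (f := fun _ => d)
    (g := fun k => #(P k ∩ s)) (by simpa using h.trans_le hcover)
  exact ⟨k, hk⟩

lemma exists_dominating_sdiff_of_card_le {P : Fin (n + 1) → Finset ι}
    (hP : IsPartition (n + 1) M P) (v : ι → ℝ) {H T : Finset ι} (hHT : Disjoint H T)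
    (hv : ∀ t ∈ T, ∀ h ∈ H, v t ≤ v h) {k : Fin (n + 1)} (hk : #T ≤ #(P k ∩ (H ∪ T))) :
    ∃ B : Fin n → Finset ι, Pairwise (Disjoint on B) ∧ (∀ j, B j ⊆ M \ T) ∧
      ∀ j, ∑ i ∈ P (k.succAbove j), v i ≤ ∑ i ∈ B j, v i := by
  have hdisj : ∀ j, Disjoint (P k) (P (k.succAbove j)) :=
    fun j => hP.1 _ _ (Fin.succAbove_ne k j).symm
  have hcard : #(T \ P k) ≤ #(P k ∩ H) := by
    have h1 := card_sdiff_add_card_inter T (P k)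
    have h2 : #(P k ∩ (H ∪ T)) = #(P k ∩ H) + #(P k ∩ T) := by
      rw [inter_union_distrib_left,
        card_union_of_disjoint (hHT.mono inter_subset_right inter_subset_right)]
    rw [inter_comm T] at h1
    omega
  obtain ⟨B, hB, hBsub, hBsum⟩ := exists_pairwise_disjoint_exchange v
    (Q := fun j => P (k.succAbove j))
    (fun j l hjl => hP.1 _ _ (Fin.succAbove_right_injective.ne hjl))
    hcard (fun j => (hdisj j).mono_left inter_subset_left)
    (fun t ht h hh => hv t (mem_sdiff.1 ht).1 h (mem_inter.1 hh).2)
  refine ⟨B, hB, fun j x hx => ?_, hBsum⟩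
  rcases mem_union.1 (hBsub j hx) with hx | hx
  · obtain ⟨hxP, hxT⟩ := mem_sdiff.1 hx
    refine mem_sdiff.2 ⟨hP.subset _ hxP, fun hT => hxT (mem_sdiff.2 ⟨hT, fun hk => ?_⟩)⟩
    exact disjoint_left.1 (hdisj j) hk hxP
  · obtain ⟨hxP, hxH⟩ := mem_inter.1 hx
    exact mem_sdiff.2 ⟨hP.subset k hxP, disjoint_left.1 hHT hxH⟩

end IsPartition

section MaximinShare

open Function

variable {ι : Type*} [DecidableEq ι] {v : ι → ℝ} {n : ℕ} {M : Finset ι}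

lemma isPartition_update_union_sdiff {B : Fin n → Finset ι} (hB : Pairwise (Disjoint on B))
    (hBM : ∀ k, B k ⊆ M) (k₀ : Fin n) :
    IsPartition n M (update B k₀ (B k₀ ∪ M \ univ.biUnion B)) := by
  set R := M \ univ.biUnion B
  have hR : ∀ k, Disjoint R (B k) :=
    fun k => disjoint_sdiff_self_left.mono_right (subset_biUnion_of_mem B (mem_univ k))
  have hle : ∀ k, B k ⊆ update B k₀ (B k₀ ∪ R) k := fun k => by
    rcases eq_or_ne k k₀ with rfl | hk
    · simp
    · simp [update_of_ne hk]
  have hdisj : ∀ k l, k ≠ l → l ≠ k₀ → Disjoint (update B k₀ (B k₀ ∪ R) k) (B l) := by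
    intro k l hkl hl
    rcases eq_or_ne k k₀ with rfl | hk
    · simpa [disjoint_union_left] using ⟨hB hkl, hR l⟩
    · simpa [update_of_ne hk] using hB hkl
  refine ⟨fun k l hkl => ?_, Subset.antisymm (biUnion_subset.2 fun k _ => ?_) fun x hx => ?_⟩
  · rcases eq_or_ne l k₀ with rfl | hl
    · simpa [update_of_ne hkl] using (hdisj l k hkl.symm hkl).symm
    · simpa [update_of_ne hl] using hdisj k l hkl hl
  · rcases eq_or_ne k k₀ with rfl | hk
    · simpa using union_subset (hBM k) sdiff_subset
    · simpa [update_of_ne hk] using hBM k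
  · rw [mem_biUnion]
    by_cases hxB : x ∈ univ.biUnion B
    · obtain ⟨k, -, hk⟩ := mem_biUnion.1 hxB
      exact ⟨k, mem_univ k, hle k hk⟩
    · exact ⟨k₀, mem_univ k₀, by simp [R, hx, hxB]⟩

lemma bddAbove_mms (v : ι → ℝ) (n : ℕ) (M : Finset ι) :
    BddAbove {x | ∃ P : Fin n → Finset ι, IsPartition n M P ∧ x = ⨅ k, ∑ j ∈ P k, v j} := by
  refine ⟨∑ j ∈ M, |v j|, ?_⟩
  rintro _ ⟨P, hP, rfl⟩
  have hM : 0 ≤ ∑ j ∈ M, |v j| := sum_nonneg fun j _ => abs_nonneg _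
  rcases isEmpty_or_nonempty (Fin n) with _ | ⟨⟨k⟩⟩
  · simpa [Real.iInf_of_isEmpty] using hM
  calc ⨅ k, ∑ j ∈ P k, v j ≤ ∑ j ∈ P k, v j := ciInf_le (Set.finite_range _).bddBelow k
    _ ≤ ∑ j ∈ P k, |v j| := sum_le_sum fun j _ => le_abs_self _
    _ ≤ ∑ j ∈ M, |v j| :=
      sum_le_sum_of_subset_of_nonneg (hP.subset k) fun j _ _ => abs_nonneg _

lemma le_mms_of_isPartition {P : Fin n → Finset ι} (hP : IsPartition n M P) :
    ⨅ k, ∑ j ∈ P k, v j ≤ mms v n M :=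
  le_csSup (bddAbove_mms v n M) ⟨P, hP, rfl⟩

lemma le_mms_of_pairwise_disjoint [NeZero n] (hv : ∀ j ∈ M, 0 ≤ v j)
    {B : Fin n → Finset ι} (hB : Pairwise (Disjoint on B)) (hBM : ∀ k, B k ⊆ M) :
    ⨅ k, ∑ j ∈ B k, v j ≤ mms v n M := by
  refine (ciInf_mono (Set.finite_range _).bddBelow fun k => ?_).trans
    (le_mms_of_isPartition (isPartition_update_union_sdiff hB hBM 0))
  rcases eq_or_ne k 0 with rfl | hk
  · rw [update_self]
    exact sum_le_sum_of_subset_of_nonneg subset_union_left fun j hj _ =>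
      hv j (union_subset (hBM 0) sdiff_subset hj)
  · rw [update_of_ne hk]

lemma mms_le_mms_of_forall_exists_dominating [NeZero n] {k : ℕ} [NeZero k] {M' : Finset ι}
    (hv : ∀ j ∈ M', 0 ≤ v j)
    (h : ∀ P : Fin n → Finset ι, IsPartition n M P → ∃ B : Fin k → Finset ι,
      Pairwise (Disjoint on B) ∧ (∀ l, B l ⊆ M') ∧
        ∀ l, ∃ i, ∑ j ∈ P i, v j ≤ ∑ j ∈ B l, v j) :
    mms v n M ≤ mms v k M' := by
  have hne := isPartition_update_union_sdiff (B := fun _ : Fin n => (∅ : Finset ι))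
    (fun _ _ _ => disjoint_empty_left _) (fun _ => empty_subset M) 0
  refine csSup_le ⟨_, _, hne, rfl⟩ ?_
  rintro _ ⟨P, hP, rfl⟩
  obtain ⟨B, hB, hBM, hPB⟩ := h P hP
  exact (ciInf_mono_of_forall_exists (Set.finite_range _).bddBelow hPB).trans
    (le_mms_of_pairwise_disjoint hv hB hBM)

end MaximinShare

/-- For an ordered instance, removing the three items ranked 2n−1, 2n, 2n+1
satisfies μ_i^{n-1}(M \ {2n−1, 2n, 2n+1}) ≥ μ_i^n(M). -/
theorem mms_remove_S3 (n m : ℕ) (hn : 2 ≤ n) (hm : 2 * n + 1 ≤ m) (v : ℕ → ℝ)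
    (hnn : ∀ j ∈ Finset.Icc 1 m, 0 ≤ v j)
    (hsorted : ∀ j k, 1 ≤ j → j ≤ k → k ≤ m → v k ≤ v j) :
    mms v n (Finset.Icc 1 m) ≤
      mms v (n - 1) (Finset.Icc 1 m \ {2 * n - 1, 2 * n, 2 * n + 1}) := by
  obtain ⟨n, rfl⟩ : ∃ k, n = k + 1 := ⟨n - 1, by omega⟩
  have : NeZero n := ⟨by omega⟩
  have hT : ({2 * (n + 1) - 1, 2 * (n + 1), 2 * (n + 1) + 1} : Finset ℕ) =
      Icc (2 * n + 1) (2 * n + 3) := by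
    ext; simp only [mem_insert, mem_singleton, mem_Icc]; omega
  have htop : Icc 1 (2 * n + 3) = Icc 1 (2 * n) ∪ Icc (2 * n + 1) (2 * n + 3) := by
    ext; simp only [mem_union, mem_Icc]; omega
  rw [Nat.add_sub_cancel, hT]
  refine mms_le_mms_of_forall_exists_dominating (fun j hj => hnn j (mem_sdiff.1 hj).1) ?_
  intro P hP
  obtain ⟨k, hk⟩ := hP.exists_lt_card_inter (d := 2)
    (Icc_subset_Icc_right (by omega : 2 * n + 3 ≤ m)) (by simp only [Nat.card_Icc]; omega)
  rw [htop] at hk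
  obtain ⟨B, hB, hBM, hPB⟩ := hP.exists_dominating_sdiff_of_card_le v
    (H := Icc 1 (2 * n)) (T := Icc (2 * n + 1) (2 * n + 3)) (k := k)
    (disjoint_left.2 fun x hx hx' => by simp only [mem_Icc] at hx hx'; omega)
    (fun t ht h hh => by
      simp only [mem_Icc] at ht hh
      exact hsorted h t hh.1 (by omega) (by omega))
    (by simp only [Nat.card_Icc]; omega)
  exact ⟨B, hB, hBM, fun l => ⟨_, hPB l⟩⟩
end

section
/- Let items be sorted in nonincreasing order of value for agent i, normalize so μ_i^n(M) = 1, and suppose v_i(1) < 3/4 and v_i(2n+1) < 1/4. Then μ_i^{n-1}(M \ {1, 2n+1}) ≥ 1. -/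
open Finset

def skipFn (n : ℕ) (r : Fin n) (k : Fin (n - 1)) : Fin n :=
  if (k : ℕ) < (r : ℕ) then ⟨k, by have := k.isLt; omega⟩
  else ⟨k + 1, by have := k.isLt; have := r.isLt; omega⟩

lemma skipFn_ne (n : ℕ) (r : Fin n) (k : Fin (n - 1)) : skipFn n r k ≠ r := by
  unfold skipFn
  split_ifs with h <;> intro he <;> rw [Fin.ext_iff] at he <;> simp at he <;> omega

lemma skipFn_inj (n : ℕ) (r : Fin n) : Function.Injective (skipFn n r) := by
  intro k l he
  unfold skipFn at he
  rw [Fin.ext_iff] at he ⊢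
  split_ifs at he <;> simp at he <;> omega

lemma skipFn_surj (n : ℕ) (r : Fin n) (j : Fin n) (hj : j ≠ r) :
    ∃ k, skipFn n r k = j := by
  have hjr : (j : ℕ) ≠ (r : ℕ) := fun h => hj (Fin.ext h)
  rcases lt_or_gt_of_ne hjr with h | h
  · exact ⟨⟨j, by have := r.isLt; omega⟩, by simp [skipFn, h]⟩
  · refine ⟨⟨(j : ℕ) - 1, by have := j.isLt; omega⟩, ?_⟩
    have : ¬ ((j : ℕ) - 1 < (r : ℕ)) := by omega
    simp only [skipFn, this, if_false]
    exact Fin.ext (by simp; omega)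


/-- For an ordered instance normalized so μ_i^n(M) = 1, with v(1) < 3/4 and
v(2n+1) < 1/4, removing the bundle S₄ = {1, 2n+1} keeps the maximin share at least 1:
μ_i^{n-1}(M \ {1, 2n+1}) ≥ 1. -/
theorem mms_remove_S4 (n m : ℕ) (hn : 2 ≤ n) (hm : 2 * n + 1 ≤ m) (v : ℕ → ℝ)
    (hnn : ∀ j ∈ Finset.Icc 1 m, 0 ≤ v j)
    (hsorted : ∀ j k, 1 ≤ j → j ≤ k → k ≤ m → v k ≤ v j)
    (hmms : mms v n (Finset.Icc 1 m) = 1)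
    (h1 : v 1 < 3 / 4) (h2 : v (2 * n + 1) < 1 / 4) :
    1 ≤ mms v (n - 1) (Finset.Icc 1 m \ {1, 2 * n + 1}) := by
  set M := Finset.Icc 1 m with hM
  have h1m : (1 : ℕ) ∈ M := by simp [hM]; omega
  have h2m : 2 * n + 1 ∈ M := by simp [hM]; omega
  have hneq : (1 : ℕ) ≠ 2 * n + 1 := by omega
  have hv1 : 0 ≤ v 1 := hnn 1 h1m
  have hv2 : 0 ≤ v (2 * n + 1) := hnn _ h2m
  have hε0 : 0 < 1 - v 1 - v (2 * n + 1) := by linarith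
  -- nonnegativity of sums over subsets of M
  have hsum_nn : ∀ S : Finset ℕ, S ⊆ M → 0 ≤ ∑ j ∈ S, v j := by
    intro S hS
    exact Finset.sum_nonneg fun j hj => hnn j (hS hj)
  suffices H : ∀ ε : ℝ, 0 < ε → ε ≤ 1 - v 1 - v (2 * n + 1) →
      1 - ε ≤ mms v (n - 1) (M \ {1, 2 * n + 1}) by
    by_contra hcon
    push_neg at hcon
    set μ := mms v (n - 1) (M \ {1, 2 * n + 1}) with hμ
    set δ := 1 - μ with hδ
    have hδpos : 0 < δ := by simp [hδ]; linarith
    have hεp : 0 < min δ (1 - v 1 - v (2 * n + 1)) / 2 := by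
      have := lt_min hδpos hε0; linarith
    have h3 := H (min δ (1 - v 1 - v (2 * n + 1)) / 2) hεp
      (by have := min_le_right δ (1 - v 1 - v (2 * n + 1)); linarith)
    have h4 := min_le_left δ (1 - v 1 - v (2 * n + 1))
    have h5 : 0 < min δ (1 - v 1 - v (2 * n + 1)) := lt_min hδpos hε0
    rw [hδ] at h4 h5
    linarith
  intro ε hε hεle
  -- obtain a partition of M into n bundles with min value > 1 - ε
  have hne0 : (0 : ℕ) < n := by omega
  have i0 : Fin n := ⟨0, hne0⟩
  have hSne : Set.Nonempty {x | ∃ P : Fin n → Finset ℕ,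
      IsPartition n M P ∧ x = ⨅ k : Fin n, ∑ j ∈ P k, v j} := by
    refine ⟨_, fun k => if k = ⟨0, hne0⟩ then M else ∅, ⟨?_, ?_⟩, rfl⟩
    · intro k l hkl
      by_cases hk : k = ⟨0, hne0⟩ <;> by_cases hl : l = ⟨0, hne0⟩ <;>
        simp_all
    · ext x
      simp only [Finset.mem_biUnion, Finset.mem_univ, true_and]
      constructor
      · rintro ⟨k, hk⟩
        split_ifs at hk with h
        · exact hk
        · simp at hk
      · intro hx
        exact ⟨⟨0, hne0⟩, by simp [hx]⟩
  have hlt : 1 - ε < sSup {x | ∃ P : Fin n → Finset ℕ,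
      IsPartition n M P ∧ x = ⨅ k : Fin n, ∑ j ∈ P k, v j} := by
    have : mms v n M = 1 := hmms
    unfold mms at this
    rw [this]; linarith
  obtain ⟨x, ⟨P, hP, hx⟩, hxgt⟩ := exists_lt_of_lt_csSup hSne hlt
  have hPsub : ∀ k, P k ⊆ M := by
    intro k j hj
    rw [← hP.2]
    exact Finset.mem_biUnion.mpr ⟨k, Finset.mem_univ k, hj⟩
  have hinf : ∀ k, 1 - ε < ∑ j ∈ P k, v j := by
    intro k
    refine lt_of_lt_of_le hxgt ?_
    rw [hx]
    exact ciInf_le (Set.Finite.bddBelow (Set.finite_range _)) k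
  -- locate items 1 and 2n+1
  obtain ⟨a, -, ha⟩ := Finset.mem_biUnion.mp (hP.2 ▸ h1m)
  obtain ⟨b, -, hb⟩ := Finset.mem_biUnion.mp (hP.2 ▸ h2m)
  have hnotin1 : ∀ j : Fin n, j ≠ a → (1 : ℕ) ∉ P j := by
    intro j hj hmem
    exact Finset.disjoint_left.mp (hP.1 j a hj) hmem ha
  have hnotin2 : ∀ j : Fin n, j ≠ b → 2 * n + 1 ∉ P j := by
    intro j hj hmem
    exact Finset.disjoint_left.mp (hP.1 j b hj) hmem hb
  -- choose c ≠ b (equal to a when a ≠ b)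
  obtain ⟨c, hcb, hca⟩ : ∃ c : Fin n, c ≠ b ∧ (a ≠ b → c = a) := by
    by_cases hab : a = b
    · refine ⟨if b = ⟨0, hne0⟩ then ⟨1, by omega⟩ else ⟨0, hne0⟩, ?_, fun h => absurd hab h⟩
      split_ifs with h
      · rw [h]; intro he; rw [Fin.ext_iff] at he; simp at he
      · exact fun e => h e.symm
    · exact ⟨a, hab, fun _ => rfl⟩
  -- the new partition into n - 1 bundles
  set s : Finset ℕ := {1, 2 * n + 1} with hs
  set Q : Fin (n - 1) → Finset ℕ :=
    fun k => (if skipFn n b k = c then P c ∪ P b else P (skipFn n b k)) \ s with hQdef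
  have hQsub : ∀ k, Q k ⊆ M := by
    intro k j hj
    rw [hQdef] at hj
    simp only at hj
    have hj' := Finset.mem_sdiff.mp hj
    split_ifs at hj' with h
    · rcases Finset.mem_union.mp hj'.1 with h' | h'
      · exact hPsub c h'
      · exact hPsub b h'
    · exact hPsub _ hj'.1
  have hQdisj : ∀ k l, k ≠ l → Disjoint (Q k) (Q l) := by
    intro k l hkl
    have hskne : skipFn n b k ≠ skipFn n b l := fun h => hkl (skipFn_inj n b h)
    rw [hQdef]
    refine Disjoint.mono sdiff_subset sdiff_subset ?_
    by_cases hk : skipFn n b k = c <;> by_cases hl : skipFn n b l = c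
    · exact absurd (hk.trans hl.symm) hskne
    · simp only [hk, if_true, hl, if_false]
      refine Finset.disjoint_union_left.mpr ⟨?_, ?_⟩
      · exact hP.1 c _ (fun h => hl (h.symm))
      · exact hP.1 b _ (fun h => (skipFn_ne n b l) h.symm)
    · simp only [hk, if_false, hl, if_true]
      refine Finset.disjoint_union_right.mpr ⟨?_, ?_⟩
      · exact hP.1 _ c hk
      · exact hP.1 _ b (skipFn_ne n b k)
    · simp only [hk, if_false, hl, if_false]
      exact hP.1 _ _ hskne
  have hQunion : Finset.univ.biUnion Q = M \ s := by
    ext y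
    simp only [Finset.mem_biUnion, Finset.mem_univ, true_and, Finset.mem_sdiff]
    constructor
    · rintro ⟨k, hk⟩
      have hk' := Finset.mem_sdiff.mp (by rw [hQdef] at hk; exact hk)
      exact ⟨hQsub k hk, hk'.2⟩
    · rintro ⟨hyM, hys⟩
      obtain ⟨j, -, hj⟩ := Finset.mem_biUnion.mp (hP.2 ▸ hyM)
      by_cases hjb : j = b
      · obtain ⟨k0, hk0⟩ := skipFn_surj n b c hcb
        refine ⟨k0, ?_⟩
        rw [hQdef]
        simp only [hk0, if_true]
        exact Finset.mem_sdiff.mpr ⟨Finset.mem_union_right _ (hjb ▸ hj), hys⟩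
      · obtain ⟨k, hk⟩ := skipFn_surj n b j hjb
        refine ⟨k, ?_⟩
        rw [hQdef]
        simp only [hk]
        refine Finset.mem_sdiff.mpr ⟨?_, hys⟩
        split_ifs with h
        · exact Finset.mem_union_left _ (h ▸ hj)
        · exact hj
  -- value bound for each bundle
  have hQval : ∀ k, 1 - ε ≤ ∑ j ∈ Q k, v j := by
    intro k
    rw [hQdef]
    simp only
    by_cases hk : skipFn n b k = c
    · simp only [hk, if_true]
      by_cases hab : a = b
      · -- P c contains neither 1 nor 2n+1; merged bundle ⊇ P c
        have hc1 : (1 : ℕ) ∉ P c := hnotin1 c (fun h => hcb (h.trans hab))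
        have hc2 : 2 * n + 1 ∉ P c := hnotin2 c hcb
        have hsub : P c ⊆ (P c ∪ P b) \ s := by
          intro y hy
          refine Finset.mem_sdiff.mpr ⟨Finset.mem_union_left _ hy, ?_⟩
          intro hys
          rw [hs] at hys
          rcases Finset.mem_insert.mp hys with h' | h'
          · exact hc1 (h' ▸ hy)
          · exact hc2 ((Finset.mem_singleton.mp h') ▸ hy)
        have hle : ∑ j ∈ P c, v j ≤ ∑ j ∈ (P c ∪ P b) \ s, v j := by
          refine Finset.sum_le_sum_of_subset_of_nonneg hsub ?_
          intro y hy _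
          rcases Finset.mem_union.mp (Finset.mem_sdiff.mp hy).1 with h' | h'
          · exact hnn y (hPsub c h')
          · exact hnn y (hPsub b h')
        linarith [hinf c]
      · -- c = a : merged bundle = (P a ∪ P b) \ {1, 2n+1}
        have hca' : c = a := hca hab
        have h1in : (1 : ℕ) ∈ P c := hca' ▸ ha
        have hssub : s ⊆ P c ∪ P b := by
          intro y hy
          rw [hs] at hy
          rcases Finset.mem_insert.mp hy with h' | h'
          · exact Finset.mem_union_left _ (h' ▸ h1in)
          · exact Finset.mem_union_right _ ((Finset.mem_singleton.mp h') ▸ hb)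
        rw [Finset.sum_sdiff_eq_sub hssub, Finset.sum_union (hP.1 c b hcb)]
        have hss : ∑ j ∈ s, v j = v 1 + v (2 * n + 1) := by
          rw [hs]; exact Finset.sum_pair hneq
        rw [hss]
        linarith [hinf c, hinf b]
    · -- untouched bundle
      simp only [hk, if_false]
      have hjb : skipFn n b k ≠ b := skipFn_ne n b k
      have hja : skipFn n b k ≠ a := by
        by_cases hab : a = b
        · exact hab ▸ hjb
        · exact (hca hab) ▸ hk
      have hn1 : (1 : ℕ) ∉ P (skipFn n b k) := hnotin1 _ hja
      have hn2 : 2 * n + 1 ∉ P (skipFn n b k) := hnotin2 _ hjb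
      have heq : P (skipFn n b k) \ s = P (skipFn n b k) := by
        refine Finset.sdiff_eq_self_of_disjoint ?_
        refine Finset.disjoint_left.mpr ?_
        intro y hy hys
        rw [hs] at hys
        rcases Finset.mem_insert.mp hys with h' | h'
        · exact hn1 (h' ▸ hy)
        · exact hn2 ((Finset.mem_singleton.mp h') ▸ hy)
      rw [heq]
      linarith [hinf (skipFn n b k)]
  -- conclude
  have hnin : Nonempty (Fin (n - 1)) := ⟨⟨0, by omega⟩⟩
  have hmem : (⨅ k : Fin (n - 1), ∑ j ∈ Q k, v j) ∈
      {x | ∃ P' : Fin (n - 1) → Finset ℕ,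
        IsPartition (n - 1) (M \ s) P' ∧ x = ⨅ k : Fin (n - 1), ∑ j ∈ P' k, v j} :=
    ⟨Q, ⟨hQdisj, hQunion⟩, rfl⟩
  have hbdd : BddAbove {x | ∃ P' : Fin (n - 1) → Finset ℕ,
      IsPartition (n - 1) (M \ s) P' ∧ x = ⨅ k : Fin (n - 1), ∑ j ∈ P' k, v j} := by
    refine ⟨∑ j ∈ M \ s, v j, ?_⟩
    rintro y ⟨P', hP', rfl⟩
    refine le_trans (ciInf_le (Set.Finite.bddBelow (Set.finite_range _)) ⟨0, by omega⟩) ?_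
    refine Finset.sum_le_sum_of_subset_of_nonneg ?_ ?_
    · intro j hj
      rw [← hP'.2]
      exact Finset.mem_biUnion.mpr ⟨⟨0, by omega⟩, Finset.mem_univ _, hj⟩
    · intro y hy _
      exact hnn y (Finset.mem_sdiff.mp hy).1
  have hlast : 1 - ε ≤ ⨅ k : Fin (n - 1), ∑ j ∈ Q k, v j := le_ciInf hQval
  calc 1 - ε ≤ ⨅ k : Fin (n - 1), ∑ j ∈ Q k, v j := hlast
    _ ≤ mms v (n - 1) (M \ s) := by unfold mms; exact le_csSup hbdd hmem
end

section
/- Under the normalization μ_a^n(M) = 1 with all agents' values for the bundles S_1, S_2, S_3, S_4 below 3/4, if agent a values some bag B_k = {k, 2n−k+1} strictly more than 1, then: (i) there exists a bag with value less than 3/4 and a bag with value more than 1 for a; (ii) v_a(1) > 5/8; (iii) v_a(B_k) < 9/8 for all k; and (iv) v_a(j) < 1/8 for all items j with index greater than 2n. -/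
open Finset

/-- Under normalization μ_a^n(M) = 1 with all bundle values of S₁,…,S₄ below
3/4, if agent a values some bag B_k = {k, 2n−k+1} strictly more than 1, then: (i) some bag
has value < 3/4 and some bag has value > 1; (ii) v_a(1) > 5/8; (iii) every bag has value
< 9/8; (iv) every item of index > 2n has value < 1/8. -/
theorem type2_agent_properties (n m : ℕ) (hn : 1 ≤ n) (hm : 2 * n + 1 ≤ m) (v : ℕ → ℝ)
    (hnn : ∀ j ∈ Finset.Icc 1 m, 0 ≤ v j)
    (hsorted : ∀ j k, 1 ≤ j → j ≤ k → k ≤ m → v k ≤ v j)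
    (hmms : mms v n (Finset.Icc 1 m) = 1)
    (hS1 : v 1 < 3 / 4)
    (hS2 : v n + v (n + 1) < 3 / 4)
    (hS3 : v (2 * n - 1) + v (2 * n) + v (2 * n + 1) < 3 / 4)
    (hS4 : v 1 + v (2 * n + 1) < 3 / 4)
    (hbig : ∃ k, 1 ≤ k ∧ k ≤ n ∧ 1 < v k + v (2 * n - k + 1)) :
    ((∃ k, 1 ≤ k ∧ k ≤ n ∧ v k + v (2 * n - k + 1) < 3 / 4) ∧
        (∃ k, 1 ≤ k ∧ k ≤ n ∧ 1 < v k + v (2 * n - k + 1))) ∧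
      (5 / 8 < v 1) ∧
      (∀ k, 1 ≤ k → k ≤ n → v k + v (2 * n - k + 1) < 9 / 8) ∧
      (∀ j, 2 * n < j → j ≤ m → v j < 1 / 8) := by
  have hvn1 : v (n + 1) < 3 / 8 := by
    have := hsorted n (n + 1) hn (by omega) (by omega)
    linarith
  have h1 : 5 / 8 < v 1 := by
    obtain ⟨k₀, hk1, hk2, hk3⟩ := hbig
    have a1 : v k₀ ≤ v 1 := hsorted 1 k₀ (le_refl 1) hk1 (by omega)
    have a2 : v (2 * n - k₀ + 1) ≤ v (n + 1) :=
      hsorted (n + 1) (2 * n - k₀ + 1) (by omega) (by omega) (by omega)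
    linarith
  refine ⟨⟨⟨n, hn, le_refl n, by rw [show 2 * n - n + 1 = n + 1 from by omega]; exact hS2⟩,
    hbig⟩, h1, ?_, ?_⟩
  · intro k hk1 hk2
    have a1 : v k ≤ v 1 := hsorted 1 k (le_refl 1) hk1 (by omega)
    have a2 : v (2 * n - k + 1) ≤ v (n + 1) :=
      hsorted (n + 1) (2 * n - k + 1) (by omega) (by omega) (by omega)
    linarith
  · intro j hj hjm
    have a1 : v j ≤ v (2 * n + 1) := hsorted (2 * n + 1) j (by omega) (by omega) hjm
    linarith
end

section
/- Suppose agent a's additive valuation satisfies: μ_a^n(M) = 1, items sorted nonincreasingly, every item value less than 3/4, and v_a(n) + v_a(n+1) < 3/4, where J = {1,…,2n}. Then in every partition P = (P_1,…,P_n) of M achieving the maximin share 1, there exists a bundle P_k with v_a(P_k \ J) > 1/4. -/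
open Finset

/-- If μ_a^n(M) = 1, items are sorted nonincreasingly, every item value is
below 3/4 and v_a(n) + v_a(n+1) < 3/4, then in every partition achieving the maximin
share 1 there is a bundle whose items outside J = {1,…,2n} have total value > 1/4. -/
theorem giver_bundle_exists (n m : ℕ) (hn : 1 ≤ n) (hm : 2 * n ≤ m) (v : ℕ → ℝ)
    (hnn : ∀ j ∈ Finset.Icc 1 m, 0 ≤ v j)
    (hsorted : ∀ j k, 1 ≤ j → j ≤ k → k ≤ m → v k ≤ v j)
    (hmms : mms v n (Finset.Icc 1 m) = 1)
    (hsmall : ∀ j, 1 ≤ j → j ≤ m → v j < 3 / 4)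
    (hS2 : v n + v (n + 1) < 3 / 4) :
    ∀ P : Fin n → Finset ℕ, IsPartition n (Finset.Icc 1 m) P →
      (⨅ k : Fin n, ∑ j ∈ P k, v j) = 1 →
      ∃ k : Fin n, 1 / 4 < ∑ j ∈ P k \ Finset.Icc 1 (2 * n), v j := by
  intro P ⟨hdisj, hcov⟩ hinf
  have hne : Nonempty (Fin n) := ⟨⟨0, hn⟩⟩
  set J : Finset ℕ := Finset.Icc 1 (2 * n) with hJ
  have hJM : J ⊆ Finset.Icc 1 m := Finset.Icc_subset_Icc_right hm
  -- each bundle has value ≥ 1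
  have hge1 : ∀ k : Fin n, (1 : ℝ) ≤ ∑ j ∈ P k, v j := by
    intro k
    rw [← hinf]
    exact ciInf_le (Set.Finite.bddBelow (Set.finite_range _)) k
  -- reduction: enough to find k with small value inside J
  have hred : ∀ k : Fin n, (∑ j ∈ P k ∩ J, v j) < 3 / 4 →
      ∃ k : Fin n, 1 / 4 < ∑ j ∈ P k \ J, v j := by
    intro k hk
    refine ⟨k, ?_⟩
    have := Finset.sum_inter_add_sum_sdiff (P k) J v
    have h1 := hge1 k
    linarith
  -- total card of intersections with J
  have hbiu : Finset.univ.biUnion (fun k => P k ∩ J) = J := by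
    ext x
    simp only [Finset.mem_biUnion, Finset.mem_inter, Finset.mem_univ, true_and]
    constructor
    · rintro ⟨k, -, hx⟩; exact hx
    · intro hx
      have hx' : x ∈ Finset.univ.biUnion P := hcov ▸ hJM hx
      obtain ⟨k, -, hk⟩ := Finset.mem_biUnion.1 hx'
      exact ⟨k, hk, hx⟩
  have hcard : ∑ k : Fin n, (P k ∩ J).card = 2 * n := by
    have := Finset.card_biUnion (s := (Finset.univ : Finset (Fin n)))
      (t := fun k => P k ∩ J) (fun k _ l _ hkl =>
        Finset.disjoint_of_subset_left Finset.inter_subset_left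
          (Finset.disjoint_of_subset_right Finset.inter_subset_left (hdisj k l hkl)))
    rw [hbiu] at this
    rw [← this, hJ, Nat.card_Icc]
    omega
  by_cases hA : ∃ k : Fin n, (P k ∩ J).card ≤ 1
  · -- some bundle has ≤ 1 item of J
    obtain ⟨k, hk⟩ := hA
    apply hred k
    interval_cases h : (P k ∩ J).card
    · rw [Finset.card_eq_zero.1 h]; norm_num
    · obtain ⟨j, hj⟩ := Finset.card_eq_one.1 h
      rw [hj, Finset.sum_singleton]
      have hjJ : j ∈ J := (Finset.mem_inter.1 (hj ▸ Finset.mem_singleton_self j)).2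
      have := Finset.mem_Icc.1 hjJ
      exact hsmall j this.1 (le_trans this.2 hm)
  · push_neg at hA
    -- every bundle has ≥ 2 items of J, hence exactly 2
    have hexact : ∀ k : Fin n, (P k ∩ J).card = 2 := by
      intro k
      by_contra hk
      have h3 : 2 < (P k ∩ J).card := lt_of_le_of_ne (hA k) (Ne.symm hk)
      have : ∑ _k : Fin n, 2 < ∑ k : Fin n, (P k ∩ J).card :=
        Finset.sum_lt_sum (fun i _ => hA i) ⟨k, Finset.mem_univ k, h3⟩
      simp [Finset.sum_const, Finset.card_univ] at this
      omega
    -- pigeonhole on T = Icc n (2n)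
    set T : Finset ℕ := Finset.Icc n (2 * n) with hT
    have hTJ : T ⊆ J := Finset.Icc_subset_Icc_left hn
    have hf : ∀ x ∈ T, ∃ k : Fin n, x ∈ P k := by
      intro x hx
      have : x ∈ Finset.univ.biUnion P := hcov ▸ hJM (hTJ hx)
      obtain ⟨k, -, hk⟩ := Finset.mem_biUnion.1 this
      exact ⟨k, hk⟩
    classical
    let f : ℕ → Fin n := fun x => if h : ∃ k : Fin n, x ∈ P k then h.choose else ⟨0, hn⟩
    have hfmem : ∀ x ∈ T, x ∈ P (f x) := by
      intro x hx
      have h := hf x hx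
      simp only [f, dif_pos h]
      exact h.choose_spec
    have hpigeon : ∃ y ∈ (Finset.univ : Finset (Fin n)), 1 <
        (T.filter fun x => f x = y).card := by
      apply Finset.exists_lt_card_fiber_of_mul_lt_card_of_maps_to
        (fun x _ => Finset.mem_univ (f x))
      rw [hT, Nat.card_Icc, Finset.card_univ, Fintype.card_fin]
      omega
    obtain ⟨y, -, hy⟩ := hpigeon
    obtain ⟨j₁, hj₁, j₂, hj₂, hne12⟩ := Finset.one_lt_card.1 hy
    simp only [Finset.mem_filter] at hj₁ hj₂
    have hj₁P : j₁ ∈ P y ∩ J := Finset.mem_inter.2 ⟨hj₁.2 ▸ hfmem j₁ hj₁.1, hTJ hj₁.1⟩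
    have hj₂P : j₂ ∈ P y ∩ J := Finset.mem_inter.2 ⟨hj₂.2 ▸ hfmem j₂ hj₂.1, hTJ hj₂.1⟩
    have hpair : P y ∩ J = {j₁, j₂} := by
      symm
      apply Finset.eq_of_subset_of_card_le
      · intro x hx
        rcases Finset.mem_insert.1 hx with h | h
        · exact h ▸ hj₁P
        · exact (Finset.mem_singleton.1 h) ▸ hj₂P
      · rw [hexact y, Finset.card_insert_of_notMem (by simpa using hne12),
          Finset.card_singleton]
    apply hred y
    rw [hpair, Finset.sum_insert (by simpa using hne12), Finset.sum_singleton]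
    -- j₁, j₂ ∈ Icc n (2n), distinct; bound by v n + v (n+1)
    have hj₁T := Finset.mem_Icc.1 hj₁.1
    have hj₂T := Finset.mem_Icc.1 hj₂.1
    have key : ∀ a b : ℕ, a ∈ T → b ∈ T → a < b → v a + v b < 3 / 4 := by
      intro a b ha hb hab
      have ha' := Finset.mem_Icc.1 ha
      have hb' := Finset.mem_Icc.1 hb
      have h1 : v a ≤ v n := hsorted n a hn ha'.1 (le_trans ha'.2 hm)
      have h2 : v b ≤ v (n + 1) := hsorted (n + 1) b (by omega) (by omega)
        (le_trans hb'.2 hm)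
      linarith
    rcases lt_or_gt_of_ne hne12 with h | h
    · exact key j₁ j₂ hj₁.1 hj₂.1 h
    · have := key j₂ j₁ hj₂.1 hj₁.1 h
      linarith
end

section
/- If a finite set of nonnegative reals each strictly less than 3/8 cannot be partitioned into two parts each of total sum at least 3/8, and the greedy procedure (repeatedly placing the largest remaining number into the currently smallest of three bins) is applied, then the result is a partition into three parts each of total sum strictly less than 3/8. -/
/-!
Track each bin by the sublist of items it received. When the next item `x` goes into a
minimal bin `u`, the other two bins hold at least `2u`. If `u + x` reached the threshold `c`,
then `u > 0` (as `x < c`), so the bin holds an earlier item, which is `≥ x`; hence `2u ≥ u + x ≥ c`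
and the bin together with `x`, against everything else, would be a 2-partition with both
sides `≥ c`.
-/

/-- One step of the greedy 3-bin procedure: add `x` to the bin with the smallest total. -/
noncomputable def greedyStep (b : ℝ × ℝ × ℝ) (x : ℝ) : ℝ × ℝ × ℝ :=
  if b.1 ≤ b.2.1 ∧ b.1 ≤ b.2.2 then (b.1 + x, b.2.1, b.2.2)
  else if b.2.1 ≤ b.2.2 then (b.1, b.2.1 + x, b.2.2)
  else (b.1, b.2.1, b.2.2 + x)

/-- The greedy 3-bin procedure: process the numbers in order, always adding to the bin
with the smallest current total, starting from three empty bins. -/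
noncomputable def greedy (xs : List ℝ) : ℝ × ℝ × ℝ := xs.foldl greedyStep (0, 0, 0)

def HasTwoSplit (c : ℝ) (l : List ℝ) : Prop :=
  ∃ s t : List ℝ, (s ++ t).Perm l ∧ c ≤ s.sum ∧ c ≤ t.sum

theorem HasTwoSplit.append_singleton {c x : ℝ} {l : List ℝ} (h : HasTwoSplit c l)
    (hx : 0 ≤ x) : HasTwoSplit c (l ++ [x]) := by
  obtain ⟨s, t, hperm, hs, ht⟩ := h
  refine ⟨s, t ++ [x], ?_, hs, by simp only [List.sum_append, List.sum_singleton]; linarith⟩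
  rw [← List.append_assoc]
  exact hperm.append_right [x]

theorem hasTwoSplit_append_singleton_of_sublist {c x : ℝ} {s l : List ℝ} (hs : s.Sublist l)
    (hmin : 3 * s.sum ≤ l.sum) (hnn : ∀ y ∈ l, 0 ≤ y) (hxl : ∀ y ∈ l, x ≤ y) (hxc : x < c)
    (hover : c ≤ s.sum + x) : HasTwoSplit c (l ++ [x]) := by
  have hx_le : x ≤ s.sum := by
    obtain _ | ⟨y, s'⟩ := s
    · simp only [List.sum_nil] at hover; linarith
    · have hy : y ∈ l := hs.subset List.mem_cons_self
      exact (hxl y hy).trans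
        (List.single_le_sum (fun z hz => hnn z (hs.subset hz)) y List.mem_cons_self)
  obtain ⟨t, hperm⟩ := hs.exists_perm_append
  have ht : t.sum = l.sum - s.sum := by rw [hperm.sum_eq, List.sum_append]; ring
  refine ⟨s ++ [x], t, ?_, by simpa using hover, by linarith⟩
  rw [List.append_assoc, List.singleton_append]
  exact (List.perm_middle.trans (hperm.symm.cons x)).trans (List.perm_append_singleton x l).symm

def bins (b : ℝ × ℝ × ℝ) : List ℝ := [b.1, b.2.1, b.2.2]

theorem greedy_append_singleton (l : List ℝ) (x : ℝ) :
    greedy (l ++ [x]) = greedyStep (greedy l) x := by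
  simp [greedy, List.foldl_append]

theorem sum_bins_greedyStep (b : ℝ × ℝ × ℝ) (x : ℝ) :
    (bins (greedyStep b x)).sum = (bins b).sum + x := by
  unfold greedyStep
  split_ifs <;> simp only [bins, List.sum_cons, List.sum_nil] <;> ring

theorem mem_bins_greedyStep {b : ℝ × ℝ × ℝ} {x v : ℝ} (hv : v ∈ bins (greedyStep b x)) :
    v ∈ bins b ∨ ∃ u ∈ bins b, (∀ w ∈ bins b, u ≤ w) ∧ v = u + x := by
  unfold greedyStep at hv
  split_ifs at hv <;> simp only [bins, List.mem_cons, List.not_mem_nil] at hv ⊢ <;> grind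

theorem sum_bins_greedy (l : List ℝ) : (bins (greedy l)).sum = l.sum := by
  induction l using List.reverseRecOn with
  | nil => simp [bins, greedy]
  | append_singleton l x ih => rw [greedy_append_singleton, sum_bins_greedyStep, ih]; simp

theorem exists_sublist_sum_eq_of_mem_bins_greedy {l : List ℝ} {v : ℝ}
    (hv : v ∈ bins (greedy l)) : ∃ s : List ℝ, s.Sublist l ∧ s.sum = v := by
  induction l using List.reverseRecOn generalizing v with
  | nil => exact ⟨[], List.Sublist.slnil, by simpa [bins, greedy, eq_comm] using hv⟩
  | append_singleton l x ih =>
    rw [greedy_append_singleton] at hv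
    rcases mem_bins_greedyStep hv with hv | ⟨u, hu, -, rfl⟩
    · obtain ⟨s, hs, rfl⟩ := ih hv
      exact ⟨s, hs.trans (List.sublist_append_left l [x]), rfl⟩
    · obtain ⟨s, hs, rfl⟩ := ih hu
      exact ⟨s ++ [x], hs.append (List.Sublist.refl [x]), by simp⟩

theorem forall_mem_bins_greedy_lt {c : ℝ} (hc : 0 < c) {l : List ℝ}
    (hsorted : l.Pairwise (fun a b => b ≤ a)) (hnn : ∀ x ∈ l, 0 ≤ x) (hsmall : ∀ x ∈ l, x < c)
    (hno : ¬ HasTwoSplit c l) : ∀ v ∈ bins (greedy l), v < c := by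
  induction l using List.reverseRecOn with
  | nil => simpa [bins, greedy] using hc
  | append_singleton l x ih =>
    simp only [List.pairwise_append, List.mem_singleton, List.mem_append] at hsorted hnn hsmall
    have hxl : ∀ y ∈ l, x ≤ y := fun y hy => hsorted.2.2 y hy x rfl
    have hx0 : 0 ≤ x := hnn x (Or.inr rfl)
    intro v hv
    rw [greedy_append_singleton] at hv
    rcases mem_bins_greedyStep hv with hv | ⟨u, hu, hmin, rfl⟩
    · exact ih hsorted.1 (fun y hy => hnn y (Or.inl hy)) (fun y hy => hsmall y (Or.inl hy))
        (fun h => hno (h.append_singleton hx0)) v hv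
    · obtain ⟨s, hs, rfl⟩ := exists_sublist_sum_eq_of_mem_bins_greedy hu
      have hmin3 : 3 * s.sum ≤ l.sum := by
        have h := List.card_nsmul_le_sum _ _ hmin
        rw [sum_bins_greedy] at h
        norm_num [bins] at h
        linarith
      by_contra hover
      exact hno (hasTwoSplit_append_singleton_of_sublist hs hmin3
        (fun y hy => hnn y (Or.inl hy)) hxl (hsmall x (Or.inr rfl)) (not_lt.mp hover))

/-- If a finite collection of nonnegative reals, each strictly less than 3/8,
admits no 2-partition with both parts summing to at least 3/8, then the greedy 3-bin
procedure applied in nonincreasing order produces three bins each of total sum < 3/8. -/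
theorem greedy_three_bins (xs : List ℝ)
    (hsorted : xs.Pairwise (fun a b => b ≤ a))
    (hnn : ∀ x ∈ xs, 0 ≤ x)
    (hsmall : ∀ x ∈ xs, x < 3 / 8)
    (hno2 : ¬ ∃ s t : List ℝ, (s ++ t).Perm xs ∧ 3 / 8 ≤ s.sum ∧ 3 / 8 ≤ t.sum) :
    (greedy xs).1 < 3 / 8 ∧ (greedy xs).2.1 < 3 / 8 ∧ (greedy xs).2.2 < 3 / 8 := by
  have h := forall_mem_bins_greedy_lt (by norm_num) hsorted hnn hsmall hno2
  simp only [bins, List.mem_cons, List.not_mem_nil, forall_eq_or_imp] at h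
  exact ⟨h.1, h.2.1, h.2.2.1⟩
end

section
/- Let y satisfy 1/4 < y < 3/8, let l > 0, k > 0 be integers, x ≥ 0 a real with x ≤ (3/4 − 2y)·l, and suppose V ≥ max{x + l/4 − y·z + z/4, z/4} where z ∈ ℝ, z ≥ 0, z ≤ (x + l/4)/y in the first case. Then V ≥ x + l/8. -/
/-- Core quantitative step (t₁ = 0 case): for 1/4 < y < 3/8, l > 0, x ≥ 0
with x ≤ (3/4 − 2y)l, and z ≥ 0, any V with
V ≥ max{x + l/4 − z(y − 1/4), z/4} satisfies V ≥ x + l/8. -/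
theorem bound_low_value_items (y l x z V : ℝ)
    (hy1 : 1 / 4 < y) (hy2 : y < 3 / 8) (hl : 0 < l) (hx : 0 ≤ x)
    (hxl : x ≤ (3 / 4 - 2 * y) * l) (hz : 0 ≤ z)
    (hV : max (x + l / 4 - z * (y - 1 / 4)) (z / 4) ≤ V) :
    x + l / 8 ≤ V := by
  have h1 := le_trans (le_max_left _ _) hV
  have h2 := le_trans (le_max_right _ _) hV
  rcases le_or_gt (z * y) (x + l / 4) with h | h
  · nlinarith [sq_nonneg (l - 2 * x), sq_nonneg x, mul_nonneg hz hx, sq_nonneg z]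
  · nlinarith [sq_nonneg (l - 2 * x), sq_nonneg x, mul_nonneg hz hx]
end

section
/- Bag-filling correctness for type-1 agents: suppose agent i has additive valuation with v_i(M) ≥ n (where n is the number of bags/agents), initial bags B_1,…,B_n with v_i(B_k) ≤ 1 for all k, and every item outside the bags has value less than 1/4 for agent i. Consider a sequential process that in each round takes a bag, adds outside items one at a time until the bag's value for some agent reaches 3/4, then assigns it. If agent i is never assigned a bag, then every bag assigned in rounds where agent i remained unassigned had value at most 1 for agent i, and agent i's value for the remaining bag plus all remaining outside items is at least 1. -/
open Finset

/-- Bag-filling correctness for type-1 agents. Agent i has v_i(M) ≥ n,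
initial bags B₁,…,Bₙ (disjoint subsets of M) with v_i(B_k) ≤ 1, and every filler item
(item of L = M \ ∪ B_k) has value < 1/4 for i. The process produces final bags T_k ⊇ B_k
whose added items come from L and are disjoint across rounds; in every round k before
round t, either no item was added (T_k = B_k) or the bag's value just before its last
added item was below 3/4 for agent i (since i was never satisfied/assigned). Then every
bag assigned before round t has value at most 1 for i, and i's value for the bag B_t
together with all remaining filler items is at least 1. -/
theorem bag_filling_type1 {ι : Type*} [DecidableEq ι] (n : ℕ) (M : Finset ι) (v : ι → ℝ)
    (hnn : ∀ j ∈ M, 0 ≤ v j)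
    (htot : (n : ℝ) ≤ ∑ j ∈ M, v j)
    (B : Fin n → Finset ι)
    (hBsub : ∀ k, B k ⊆ M)
    (hBdisj : ∀ k l, k ≠ l → Disjoint (B k) (B l))
    (hB1 : ∀ k, ∑ j ∈ B k, v j ≤ 1)
    (L : Finset ι) (hL : L = M \ Finset.univ.biUnion B)
    (hLsmall : ∀ j ∈ L, v j < 1 / 4)
    (T : Fin n → Finset ι) (t : Fin n)
    (hT1 : ∀ k, B k ⊆ T k)
    (hT2 : ∀ k, T k \ B k ⊆ L)
    (hT3 : ∀ k l, k ≠ l → Disjoint (T k \ B k) (T l \ B l))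
    (hlast : ∀ k, k < t → T k = B k ∨
      ∃ j ∈ T k \ B k, ∑ x ∈ (T k).erase j, v x < 3 / 4) :
    (∀ k, k < t → ∑ j ∈ T k, v j ≤ 1) ∧
      1 ≤ ∑ j ∈ B t ∪
        (L \ (Finset.univ.filter (fun k => k < t)).biUnion fun k => T k \ B k), v j := by
  have part1 : ∀ k, k < t → ∑ j ∈ T k, v j ≤ 1 := by
    intro k hk
    rcases hlast k hk with h | ⟨j, hj, h34⟩
    · rw [h]; exact hB1 k
    · have hjT : j ∈ T k := (Finset.mem_sdiff.mp hj).1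
      have hjL : j ∈ L := hT2 k hj
      have hjs := hLsmall j hjL
      have := Finset.sum_erase_add (T k) v hjT
      linarith
  refine ⟨part1, ?_⟩
  set s : Finset (Fin n) := Finset.univ.filter (fun k => k < t) with hs
  set U : Finset ι := s.biUnion (fun k => T k \ B k) with hU
  have hts : t ∉ s := by simp [hs]
  have hUL : U ⊆ L := Finset.biUnion_subset.mpr fun k _ => hT2 k
  -- value of U
  have hUval : ∑ j ∈ U, v j = ∑ k ∈ s, ∑ j ∈ T k \ B k, v j :=
    Finset.sum_biUnion (fun k _ l _ hkl => hT3 k l hkl)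
  -- each round's added value
  have hround : ∀ k ∈ s, ∑ j ∈ T k \ B k, v j ≤ 1 - ∑ j ∈ B k, v j := by
    intro k hk
    have hklt : k < t := (Finset.mem_filter.mp hk).2
    have := part1 k hklt
    rw [Finset.sum_sdiff_eq_sub (hT1 k)]
    linarith
  have hUbound : ∑ j ∈ U, v j ≤ (s.card : ℝ) - ∑ k ∈ s, ∑ j ∈ B k, v j := by
    rw [hUval]
    calc ∑ k ∈ s, ∑ j ∈ T k \ B k, v j ≤ ∑ k ∈ s, (1 - ∑ j ∈ B k, v j) :=
          Finset.sum_le_sum hround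
      _ = (s.card : ℝ) - ∑ k ∈ s, ∑ j ∈ B k, v j := by
          rw [Finset.sum_sub_distrib, Finset.sum_const, nsmul_eq_mul, mul_one]
  -- split M
  have hBM : Finset.univ.biUnion B ⊆ M := Finset.biUnion_subset.mpr fun k _ => hBsub k
  have hMval : ∑ j ∈ L, v j + ∑ j ∈ Finset.univ.biUnion B, v j = ∑ j ∈ M, v j := by
    rw [hL]; exact Finset.sum_sdiff hBM
  have hBval : ∑ j ∈ Finset.univ.biUnion B, v j = ∑ k, ∑ j ∈ B k, v j :=
    Finset.sum_biUnion (fun k _ l _ hkl => hBdisj k l hkl)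
  -- split univ sum
  have hins : insert t s ⊆ (Finset.univ : Finset (Fin n)) := Finset.subset_univ _
  have hsplit : ∑ k, ∑ j ∈ B k, v j
      = ∑ j ∈ B t, v j + ∑ k ∈ s, ∑ j ∈ B k, v j
        + ∑ k ∈ Finset.univ \ insert t s, ∑ j ∈ B k, v j := by
    rw [← Finset.sum_sdiff hins, Finset.sum_insert hts]
    ring
  have hcard : ((Finset.univ \ insert t s).card : ℝ) = (n : ℝ) - (s.card + 1) := by
    rw [Finset.card_sdiff_of_subset hins, Finset.card_insert_of_notMem hts]
    have h1 : s.card + 1 ≤ (Finset.univ : Finset (Fin n)).card :=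
      Finset.card_insert_of_notMem hts ▸ Finset.card_le_card hins
    rw [Nat.cast_sub h1]
    simp
  have hrest : ∑ k ∈ Finset.univ \ insert t s, ∑ j ∈ B k, v j
      ≤ (n : ℝ) - (s.card + 1) := by
    rw [← hcard]
    calc ∑ k ∈ Finset.univ \ insert t s, ∑ j ∈ B k, v j
        ≤ ∑ _k ∈ Finset.univ \ insert t s, (1 : ℝ) :=
          Finset.sum_le_sum (fun k _ => hB1 k)
      _ = _ := by rw [Finset.sum_const, nsmul_eq_mul, mul_one]
  -- value of remaining fillers
  have hLU : ∑ j ∈ L \ U, v j = ∑ j ∈ L, v j - ∑ j ∈ U, v j := by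
    have := Finset.sum_sdiff hUL (f := v)
    linarith
  -- disjointness of B t and L \ U
  have hdisj : Disjoint (B t) (L \ U) := by
    apply Finset.disjoint_left.mpr
    intro a haB haL
    have haL' : a ∈ L := (Finset.mem_sdiff.mp haL).1
    rw [hL] at haL'
    exact (Finset.mem_sdiff.mp haL').2
      (Finset.mem_biUnion.mpr ⟨t, Finset.mem_univ t, haB⟩)
  rw [Finset.sum_union hdisj]
  linarith
end
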